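/- Let d ≥ 1, p ≥ 0, and let I_n = [x_n, x_{n+1}] with h_n := x_{n+1} − x_n > 0. Let v : I_n → ℝ^d have all components polynomial of degree ≤ p+1 and suppose ∫_{I_n} v(x) · φ(x) dx = 0 for every ℝ^d-valued φ whose components are polynomials of degree ≤ p−1. Then ‖v‖²_{L₂(I_n)} ≤ h_n ( |v(x_n)|² + |v(x_{n+1})|² ), where |·| denotes the Euclidean norm on ℝ^d. -/

import Mathlib

/-!
On `[a, b]` the Legendre polynomials `R_k = D^k ((X - a)(X - b))^k` (Rodrigues' formula) are
orthogonal to every polynomial of degree `< k`, by `k` integrations by parts. A polynomial `v` of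
degree `≤ p + 1` orthogonal to all polynomials of degree `< p` therefore lies in the span of `R_p`
and `R_{p+1}`: write `v = c R_p + d R_{p+1}`. Then `‖v‖² = c² ‖R_p‖² + d² ‖R_{p+1}‖²`, and
`R_k(a) = (-1)^k R_k(b)` makes the cross terms cancel in
`v(a)² + v(b)² = 2 (c² R_p(b)² + d² R_{p+1}(b)²)`.
It remains to see `‖R_k‖² ≤ (b - a) R_k(b)²`: integrating by parts once more,
`‖R_k‖² = (2k)! ∫ ((x - a)(b - x))^k`, and `(x - a)(b - x) ≤ (b - a)² / 4`, `(2k)! ≤ 4^k (k!)²`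
give exactly `(b - a) (k! (b - a)^k)² = (b - a) R_k(b)²`.
The vector case is the sum over components.
-/

open MeasureTheory

theorem Nat.factorial_two_mul_le_four_pow_mul_sq (n : ℕ) :
    (2 * n).factorial ≤ 4 ^ n * n.factorial ^ 2 := by
  rw [← Nat.choose_mul_factorial_mul_factorial (by omega : n ≤ 2 * n),
    show 2 * n - n = n by omega, mul_assoc, ← sq, ← Nat.centralBinom_eq_two_mul_choose]
  exact Nat.mul_le_mul_right _ n.centralBinom_le_four_pow

namespace Polynomial

section Algebra

variable {R : Type*} [CommRing R]

theorem eval_iterate_derivative_X_sub_C_pow_mul (t : R) (k : ℕ) (q : R[X]) :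
    (derivative^[k] ((X - C t) ^ k * q)).eval t = k.factorial * q.eval t := by
  rw [iterate_derivative_mul, eval_finsetSum,
    Finset.sum_eq_single_of_mem 0 (Finset.mem_range.mpr k.succ_pos)]
  · rw [k.choose_zero_right, one_smul, eval_mul, k.sub_zero, iterate_derivative_X_sub_pow_self,
      eval_natCast, Function.iterate_zero_apply]
  · intro i hi hi0
    rw [iterate_derivative_X_sub_pow, eval_smul, eval_mul, eval_smul, eval_pow,
      Nat.sub_sub_self (Finset.mem_range_succ_iff.mp hi), eval_sub, eval_X, eval_C, sub_self,
      zero_pow hi0, smul_zero, zero_mul, smul_zero]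

theorem Monic.iterate_derivative_natDegree {p : R[X]} (hp : p.Monic) :
    derivative^[p.natDegree] p = C (p.natDegree.factorial : R) := by
  have hdeg : (derivative^[p.natDegree] p).natDegree ≤ 0 :=
    (natDegree_iterate_derivative p _).trans (Nat.sub_self _).le
  rw [eq_C_of_natDegree_le_zero hdeg, coeff_iterate_derivative, zero_add, hp.coeff_natDegree,
    Nat.descFactorial_self, nsmul_one]

noncomputable def rodriguesBase (a b : R) (k : ℕ) : R[X] := ((X - C a) * (X - C b)) ^ k

/-- `k! (b - a) ^ k` times the Legendre polynomial of degree `k` shifted to `[a, b]`. -/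
noncomputable def rodrigues (a b : R) (k : ℕ) : R[X] := derivative^[k] (rodriguesBase a b k)

theorem rodriguesBase_comm (a b : R) (k : ℕ) : rodriguesBase a b k = rodriguesBase b a k := by
  rw [rodriguesBase, rodriguesBase, mul_comm]

theorem rodrigues_comm (a b : R) (k : ℕ) : rodrigues a b k = rodrigues b a k := by
  rw [rodrigues, rodrigues, rodriguesBase_comm]

theorem monic_rodriguesBase (a b : R) (k : ℕ) : (rodriguesBase a b k).Monic :=
  ((monic_X_sub_C a).mul (monic_X_sub_C b)).pow k

theorem natDegree_rodriguesBase [Nontrivial R] (a b : R) (k : ℕ) :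
    (rodriguesBase a b k).natDegree = 2 * k := by
  rw [rodriguesBase, ((monic_X_sub_C a).mul (monic_X_sub_C b)).natDegree_pow,
    (monic_X_sub_C a).natDegree_mul (monic_X_sub_C b), natDegree_X_sub_C, natDegree_X_sub_C,
    mul_comm]

theorem eval_iterate_derivative_rodriguesBase_left {j k : ℕ} (hj : j < k) (a b : R) :
    (derivative^[j] (rodriguesBase a b k)).eval a = 0 := by
  have hdvd : (X - C a) ^ (k - j) ∣ derivative^[j] (rodriguesBase a b k) :=
    pow_sub_dvd_iterate_derivative_of_pow_dvd j
      (by rw [rodriguesBase, mul_pow]; exact dvd_mul_right _ _)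
  exact dvd_iff_isRoot.mp ((dvd_pow_self _ (Nat.sub_ne_zero_of_lt hj)).trans hdvd)

theorem eval_iterate_derivative_rodriguesBase_right {j k : ℕ} (hj : j < k) (a b : R) :
    (derivative^[j] (rodriguesBase a b k)).eval b = 0 := by
  rw [rodriguesBase_comm]
  exact eval_iterate_derivative_rodriguesBase_left hj b a

theorem eval_rodrigues_left (a b : R) (k : ℕ) :
    (rodrigues a b k).eval a = k.factorial * (a - b) ^ k := by
  rw [rodrigues, rodriguesBase, mul_pow, eval_iterate_derivative_X_sub_C_pow_mul, eval_pow,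
    eval_sub, eval_X, eval_C]

theorem eval_rodrigues_right (a b : R) (k : ℕ) :
    (rodrigues a b k).eval b = k.factorial * (b - a) ^ k := by
  rw [rodrigues_comm, eval_rodrigues_left]

theorem iterate_derivative_rodrigues [Nontrivial R] (a b : R) (k : ℕ) :
    derivative^[k] (rodrigues a b k) = C ((2 * k).factorial : R) := by
  rw [rodrigues, ← Function.iterate_add_apply, ← two_mul, ← natDegree_rodriguesBase a b k,
    (monic_rodriguesBase a b k).iterate_derivative_natDegree]

theorem degree_rodrigues [CharZero R] (a b : R) (k : ℕ) : (rodrigues a b k).degree = k := by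
  apply degree_eq_of_le_of_coeff_ne_zero
  · rw [← natDegree_le_iff_degree_le, rodrigues]
    exact (natDegree_iterate_derivative _ k).trans (by rw [natDegree_rodriguesBase]; omega)
  · rw [rodrigues, coeff_iterate_derivative, ← two_mul, ← natDegree_rodriguesBase a b k,
      (monic_rodriguesBase a b k).coeff_natDegree, nsmul_one, natDegree_rodriguesBase,
      Nat.cast_ne_zero, Ne, Nat.descFactorial_eq_zero_iff_lt]
    omega

end Algebra

theorem exists_degree_sub_smul_lt {K : Type*} [Field K] {v q : K[X]} {k : ℕ}
    (hq : q.degree = k) (hv : v.degree ≤ k) : ∃ c : K, (v - c • q).degree < k := by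
  have hqk : q.coeff k ≠ 0 := coeff_ne_zero_of_eq_degree hq
  refine ⟨v.coeff k / q.coeff k, (degree_lt_iff_coeff_zero _ _).mpr fun m hm => ?_⟩
  rcases hm.eq_or_lt with rfl | hlt
  · rw [coeff_sub, coeff_smul, smul_eq_mul, div_mul_cancel₀ _ hqk, sub_self]
  · have hmk : (k : WithBot ℕ) < m := by exact_mod_cast hlt
    rw [coeff_sub, coeff_smul, coeff_eq_zero_of_degree_lt (hv.trans_lt hmk),
      coeff_eq_zero_of_degree_lt (hq.trans_lt hmk), smul_zero, sub_zero]

section Integral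

variable {a b : ℝ}

theorem intervalIntegrable_eval_mul_eval (P Q : ℝ[X]) (a b : ℝ) :
    IntervalIntegrable (fun x => P.eval x * Q.eval x) volume a b :=
  (P.continuous.mul Q.continuous).intervalIntegrable a b

theorem integral_derivative_mul_eq_neg {g : ℝ[X]} (ha : g.eval a = 0) (hb : g.eval b = 0)
    (χ : ℝ[X]) :
    ∫ x in a..b, (derivative g).eval x * χ.eval x =
      -∫ x in a..b, g.eval x * (derivative χ).eval x := by
  rw [intervalIntegral.integral_mul_deriv_eq_deriv_mul (fun x _ => g.hasDerivAt x)
    (fun x _ => χ.hasDerivAt x) ((derivative g).continuous.intervalIntegrable a b)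
    ((derivative χ).continuous.intervalIntegrable a b), ha, hb]
  ring

theorem integral_iterate_derivative_mul_eq {k : ℕ} {f : ℝ[X]}
    (hf : ∀ j < k, (derivative^[j] f).eval a = 0 ∧ (derivative^[j] f).eval b = 0)
    (ψ : ℝ[X]) :
    ∫ x in a..b, (derivative^[k] f).eval x * ψ.eval x =
      (-1) ^ k * ∫ x in a..b, f.eval x * (derivative^[k] ψ).eval x := by
  induction k generalizing f with
  | zero => simp
  | succ k ih =>
    have hf' : ∀ j < k, (derivative^[j] (derivative f)).eval a = 0 ∧
        (derivative^[j] (derivative f)).eval b = 0 := fun j hj => hf (j + 1) (by omega)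
    obtain ⟨ha, hb⟩ : f.eval a = 0 ∧ f.eval b = 0 := hf 0 k.succ_pos
    rw [Function.iterate_succ_apply, ih hf', integral_derivative_mul_eq_neg ha hb,
      Function.iterate_succ_apply']
    ring

theorem eq_zero_of_integral_eval_sq_eq_zero (hab : a < b) {w : ℝ[X]}
    (h : ∫ x in a..b, w.eval x ^ 2 = 0) : w = 0 := by
  by_contra hw
  obtain ⟨c, hc, hroot⟩ := ((Set.Icc_infinite hab).sdiff (finite_setOfPred_isRoot hw)).nonempty
  refine h.not_gt (intervalIntegral.integral_pos hab (w.continuous.pow 2).continuousOn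
    (fun x _ => sq_nonneg _) ⟨c, hc, ?_⟩)
  exact pow_two_pos_of_ne_zero hroot

end Integral

section Legendre

variable {a b : ℝ}

theorem integral_rodrigues_mul (k : ℕ) (ψ : ℝ[X]) :
    ∫ x in a..b, (rodrigues a b k).eval x * ψ.eval x =
      (-1) ^ k * ∫ x in a..b, (rodriguesBase a b k).eval x * (derivative^[k] ψ).eval x :=
  integral_iterate_derivative_mul_eq
    (fun _ hj => ⟨eval_iterate_derivative_rodriguesBase_left hj a b,
      eval_iterate_derivative_rodriguesBase_right hj a b⟩) ψ

theorem integral_rodrigues_mul_eq_zero {k : ℕ} {ψ : ℝ[X]} (hψ : ψ.degree < k) :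
    ∫ x in a..b, (rodrigues a b k).eval x * ψ.eval x = 0 := by
  simp [integral_rodrigues_mul, iterate_derivative_eq_zero_of_degree_lt hψ]

theorem neg_one_pow_mul_eval_rodriguesBase (a b x : ℝ) (k : ℕ) :
    (-1) ^ k * (rodriguesBase a b k).eval x = ((x - a) * (b - x)) ^ k := by
  rw [rodriguesBase, eval_pow, eval_mul, eval_sub, eval_sub, eval_X, eval_C, eval_C, ← mul_pow]
  ring

theorem neg_one_pow_mul_integral_rodriguesBase_le (hab : a ≤ b) (k : ℕ) :
    (-1) ^ k * ∫ x in a..b, (rodriguesBase a b k).eval x ≤ (b - a) * ((b - a) ^ 2 / 4) ^ k := by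
  rw [← intervalIntegral.integral_const_mul, ← smul_eq_mul (b - a),
    ← intervalIntegral.integral_const]
  refine intervalIntegral.integral_mono_on hab (Continuous.intervalIntegrable (by fun_prop) a b)
    intervalIntegrable_const fun x ⟨hax, hxb⟩ => ?_
  rw [neg_one_pow_mul_eval_rodriguesBase]
  -- AM-GM for the two distances to the endpoints
  exact pow_le_pow_left₀ (by nlinarith) (by nlinarith [sq_nonneg (x - a - (b - x))]) k

theorem integral_rodrigues_sq_le (hab : a ≤ b) (k : ℕ) :
    ∫ x in a..b, (rodrigues a b k).eval x ^ 2 ≤ (k.factorial * (b - a) ^ k) ^ 2 * (b - a) := by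
  have hsq : ∫ x in a..b, (rodrigues a b k).eval x ^ 2 =
      (2 * k).factorial * ((-1) ^ k * ∫ x in a..b, (rodriguesBase a b k).eval x) := by
    simp_rw [sq, integral_rodrigues_mul, iterate_derivative_rodrigues, eval_C,
      intervalIntegral.integral_mul_const]
    ring
  have hfact : ((2 * k).factorial : ℝ) ≤ 4 ^ k * k.factorial ^ 2 := by
    exact_mod_cast Nat.factorial_two_mul_le_four_pow_mul_sq k
  calc ∫ x in a..b, (rodrigues a b k).eval x ^ 2
      ≤ (2 * k).factorial * ((b - a) * ((b - a) ^ 2 / 4) ^ k) := by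
        rw [hsq]
        exact mul_le_mul_of_nonneg_left (neg_one_pow_mul_integral_rodriguesBase_le hab k)
          (by positivity)
    _ ≤ (4 ^ k * k.factorial ^ 2) * ((b - a) * ((b - a) ^ 2 / 4) ^ k) := by
        gcongr
    _ = (k.factorial * (b - a) ^ k) ^ 2 * (b - a) := by
        rw [div_pow, ← pow_mul]
        field_simp
        ring

end Legendre

section Orthogonal

variable {a b : ℝ}

theorem integral_eval_sub_smul_mul (P Q ψ : ℝ[X]) (c : ℝ) :
    ∫ x in a..b, (P - c • Q).eval x * ψ.eval x =
      (∫ x in a..b, P.eval x * ψ.eval x) - c * ∫ x in a..b, Q.eval x * ψ.eval x := by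
  simp_rw [eval_sub, eval_smul, smul_eq_mul, sub_mul, mul_assoc]
  rw [intervalIntegral.integral_sub (intervalIntegrable_eval_mul_eval P ψ a b)
    ((intervalIntegrable_eval_mul_eval Q ψ a b).const_mul c), intervalIntegral.integral_const_mul]

theorem integral_eval_smul_add_smul_sq {P Q : ℝ[X]}
    (hQP : ∫ x in a..b, Q.eval x * P.eval x = 0) (c d : ℝ) :
    ∫ x in a..b, (c • P + d • Q).eval x ^ 2 =
      c ^ 2 * (∫ x in a..b, P.eval x ^ 2) + d ^ 2 * ∫ x in a..b, Q.eval x ^ 2 := by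
  have hexpand : ∀ x, (c • P + d • Q).eval x ^ 2 = c ^ 2 * P.eval x ^ 2 +
      (d ^ 2 * Q.eval x ^ 2 + 2 * c * d * (Q.eval x * P.eval x)) := by
    intro x
    simp only [eval_add, eval_smul, smul_eq_mul]
    ring
  simp_rw [hexpand]
  rw [intervalIntegral.integral_add, intervalIntegral.integral_add,
    intervalIntegral.integral_const_mul, intervalIntegral.integral_const_mul,
    intervalIntegral.integral_const_mul, hQP, mul_zero, add_zero]
  all_goals exact Continuous.intervalIntegrable (by fun_prop) a b

theorem exists_eq_smul_rodrigues_add_smul_rodrigues (hab : a < b) {p : ℕ} {v : ℝ[X]}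
    (hv : v.degree ≤ ↑(p + 1))
    (horth : ∀ ψ : ℝ[X], ψ.degree < p → ∫ x in a..b, v.eval x * ψ.eval x = 0) :
    ∃ c d : ℝ, v = c • rodrigues a b p + d • rodrigues a b (p + 1) := by
  obtain ⟨d, hd⟩ := exists_degree_sub_smul_lt (degree_rodrigues a b (p + 1)) hv
  obtain ⟨c, hc⟩ := exists_degree_sub_smul_lt (degree_rodrigues a b p) (Order.le_of_lt_succ hd)
  set w := v - d • rodrigues a b (p + 1) - c • rodrigues a b p
  have hw : ∫ x in a..b, w.eval x ^ 2 = 0 := by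
    simp_rw [sq]
    rw [integral_eval_sub_smul_mul, integral_eval_sub_smul_mul, horth w hc,
      integral_rodrigues_mul_eq_zero hc,
      integral_rodrigues_mul_eq_zero (hc.trans (by exact_mod_cast p.lt_succ_self))]
    ring
  have hw0 : v - d • rodrigues a b (p + 1) - c • rodrigues a b p = 0 :=
    eq_zero_of_integral_eval_sq_eq_zero hab hw
  refine ⟨c, d, ?_⟩
  rw [sub_sub, sub_eq_zero] at hw0
  rw [hw0, add_comm]

theorem integral_eval_sq_le_of_orthogonal (hab : a < b) {p : ℕ} {v : ℝ[X]}
    (hv : v.degree ≤ ↑(p + 1))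
    (horth : ∀ ψ : ℝ[X], ψ.degree < p → ∫ x in a..b, v.eval x * ψ.eval x = 0) :
    ∫ x in a..b, v.eval x ^ 2 ≤ (b - a) * (v.eval a ^ 2 + v.eval b ^ 2) := by
  obtain ⟨c, d, rfl⟩ := exists_eq_smul_rodrigues_add_smul_rodrigues hab hv horth
  have horth_pq : ∫ x in a..b, (rodrigues a b (p + 1)).eval x * (rodrigues a b p).eval x = 0 :=
    integral_rodrigues_mul_eq_zero (by rw [degree_rodrigues]; exact_mod_cast p.lt_succ_self)
  set A : ℝ := p.factorial * (b - a) ^ p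
  set B : ℝ := (p + 1).factorial * (b - a) ^ (p + 1)
  have hva : (c • rodrigues a b p + d • rodrigues a b (p + 1)).eval a ^ 2 =
      (c * A - d * B) ^ 2 := by
    have hflip : ∀ k : ℕ, (a - b) ^ k = (-1) ^ k * (b - a) ^ k := fun k => by
      rw [← neg_sub b a, neg_pow]
    have heval : (c • rodrigues a b p + d • rodrigues a b (p + 1)).eval a =
        (-1) ^ p * (c * A - d * B) := by
      simp only [eval_add, eval_smul, smul_eq_mul, eval_rodrigues_left, hflip, A, B]
      ring
    rw [heval, mul_pow, ← pow_mul, (even_two.mul_left p).neg_one_pow, one_mul]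
  have hvb : (c • rodrigues a b p + d • rodrigues a b (p + 1)).eval b = c * A + d * B := by
    simp only [eval_add, eval_smul, smul_eq_mul, eval_rodrigues_right, A, B]
  have hba : 0 ≤ b - a := sub_nonneg.mpr hab.le
  calc ∫ x in a..b, (c • rodrigues a b p + d • rodrigues a b (p + 1)).eval x ^ 2
      ≤ c ^ 2 * (A ^ 2 * (b - a)) + d ^ 2 * (B ^ 2 * (b - a)) := by
        rw [integral_eval_smul_add_smul_sq horth_pq]
        gcongr
        · exact integral_rodrigues_sq_le hab.le p
        · exact integral_rodrigues_sq_le hab.le (p + 1)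
    _ ≤ (b - a) * ((c * A - d * B) ^ 2 + (c * A + d * B) ^ 2) := by
        nlinarith [mul_nonneg hba (add_nonneg (sq_nonneg (c * A)) (sq_nonneg (d * B)))]
    _ = (b - a) * ((c • rodrigues a b p + d • rodrigues a b (p + 1)).eval a ^ 2 +
          (c • rodrigues a b p + d • rodrigues a b (p + 1)).eval b ^ 2) := by
        rw [hva, hvb]

end Orthogonal

end Polynomial

theorem cell_orthogonal_L2_bound_general
    (d : ℕ) (p : ℕ)
    (xn xnp : ℝ) (hx : xn < xnp)
    (V : Fin d → Polynomial ℝ) (hV : ∀ i, (V i).natDegree ≤ p + 1)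
    (horthV : ∀ φ : Fin d → Polynomial ℝ, (∀ i, (φ i).degree < (p : ℕ)) →
      (∫ x in xn..xnp, ∑ i, (V i).eval x * (φ i).eval x) = 0) :
    (∫ x in xn..xnp, ∑ i, ((V i).eval x) ^ 2) ≤
      (xnp - xn) * ((∑ i, ((V i).eval xn) ^ 2) + ∑ i, ((V i).eval xnp) ^ 2) := by
  have horth : ∀ i, ∀ ψ : Polynomial ℝ, ψ.degree < p →
      ∫ x in xn..xnp, (V i).eval x * ψ.eval x = 0 := by
    intro i ψ hψ
    have hφ : ∀ j, ((Pi.single i ψ : Fin d → Polynomial ℝ) j).degree < p := by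
      intro j
      rcases eq_or_ne j i with rfl | hji
      · simpa using hψ
      · simp [hji]
    simpa [Pi.single_apply, apply_ite] using horthV (Pi.single i ψ) hφ
  rw [intervalIntegral.integral_finsetSum
      fun i _ => Continuous.intervalIntegrable (by fun_prop) _ _,
    ← Finset.sum_add_distrib, Finset.mul_sum]
  exact Finset.sum_le_sum fun i _ => Polynomial.integral_eval_sq_le_of_orthogonal hx
    (Polynomial.natDegree_le_iff_degree_le.mp (hV i)) (horth i)

/-- **L₂ bound for an almost-orthogonal cell polynomial** (the bound underlying (5.18) of
the paper): an `ℝ^d`-valued polynomial `v` of degree `≤ p+1` on the cell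
`I_n = [x_n, x_{n+1}]` of length `h_n` that is `L₂(I_n)`-orthogonal to all polynomials of
degree `≤ p-1` (expressed as `degree < p`) satisfies
`‖v‖²_{L₂(I_n)} ≤ h_n (|v(x_n)|² + |v(x_{n+1})|²)` with `|·|` the Euclidean norm. -/
theorem cell_orthogonal_L2_bound
    (d : ℕ) (hd : 1 ≤ d) (p : ℕ)
    (xn xnp : ℝ) (hx : xn < xnp)
    (V : Fin d → Polynomial ℝ) (hV : ∀ i, (V i).natDegree ≤ p + 1)
    (horthV : ∀ φ : Fin d → Polynomial ℝ, (∀ i, (φ i).degree < (p : ℕ)) →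
      (∫ x in xn..xnp, ∑ i, (V i).eval x * (φ i).eval x) = 0) :
    (∫ x in xn..xnp, ∑ i, ((V i).eval x) ^ 2) ≤
      (xnp - xn) * ((∑ i, ((V i).eval xn) ^ 2) + ∑ i, ((V i).eval xnp) ^ 2) :=
  cell_orthogonal_L2_bound_general d p xn xnp hx V hV horthV
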